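/- arXiv:math/0508519 — 3 statements merged into one kernel-verified Lean document; each statement's English description precedes it below -/
import Mathlib

section
/- Let X_1,...,X_n (n >= 2) be exchangeable random variables with sum_{j=1}^n X_j = 0 and sum_{j=1}^n X_j^2 = n almost surely. Then for each 1 <= i <= n, E[ (E(X_i | X_1,...,X_{i-1}))^2 ] = (i-1) / ((n-i+1)(n-1)). -/
/-!
Swapping two coordinates outside the past `{j | j < i}` fixes every event of the past
σ-algebra, so by exchangeability all the coordinates `X j` with `j ≥ i` have the same
conditional expectation given the past. Conditioning `∑ X j = 0` on the past then gives
`E(X_i | past) = -(n - i)⁻¹ ∑_{j < i} X j`. On the other hand exchangeability and the two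
constraints force `E X_j² = 1` and `E X_j X_k = -1/(n-1)` for `j ≠ k`, so the partial sum has
second moment `i (n - i) / (n - 1)`.
-/

open MeasureTheory ProbabilityTheory Finset

section

variable {Ω ι : Type*} {mΩ : MeasurableSpace Ω} {μ : Measure Ω}

theorem cylinderEvents_le_invariants_comp_perm {β : Type*} [MeasurableSpace β] {Δ : Set ι}
    {σ : Equiv.Perm ι} (hσ : ∀ i ∈ Δ, σ i = i) :
    cylinderEvents (X := fun _ : ι => β) Δ ≤ MeasurableSpace.invariants (fun x : ι → β => x ∘ σ) :=
  iSup₂_le fun i hi => measurable_iff_comap_le.mp <|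
    MeasurableSpace.measurable_invariants_dom.mpr
      ⟨measurable_pi_apply i, fun s _ => by simp [Function.comp_def, hσ i hi]⟩

theorem iSup_comap_eq_comap_cylinderEvents {β : Type*} [MeasurableSpace β] (X : ι → Ω → β)
    (p : ι → Prop) :
    ⨆ (l) (_ : p l), MeasurableSpace.comap (X l) inferInstance
      = (cylinderEvents {l | p l}).comap fun ω l => X l ω := by
  simp only [cylinderEvents, MeasurableSpace.comap_iSup, MeasurableSpace.comap_comp]
  rfl

namespace ProbabilityTheory

theorem integral_sum_sq_eq {X : ι → Ω → ℝ} (hX2 : ∀ i, MemLp (X i) 2 μ) (s : Finset ι) {a b : ℝ}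
    (ha : ∀ j ∈ s, ∫ ω, X j ω ^ 2 ∂μ = a)
    (hb : ∀ j ∈ s, ∀ k ∈ s, j ≠ k → ∫ ω, X j ω * X k ω ∂μ = b) :
    ∫ ω, (∑ j ∈ s, X j ω) ^ 2 ∂μ = #s * a + #s * (#s - 1) * b := by
  classical
  have hprod : ∀ j k, Integrable (fun ω => X j ω * X k ω) μ := fun j k =>
    memLp_one_iff_integrable.mp ((hX2 k).mul (hX2 j))
  have hrow : ∀ j ∈ s, ∑ k ∈ s, ∫ ω, X j ω * X k ω ∂μ = a + (#s - 1) * b := fun j hj => by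
    rw [← add_sum_erase _ _ hj, sum_congr rfl fun k hk =>
        hb j hj k (mem_of_mem_erase hk) (ne_of_mem_erase hk).symm,
      sum_const, card_erase_of_mem hj, nsmul_eq_mul, Nat.cast_sub (card_pos.mpr ⟨j, hj⟩),
      Nat.cast_one, ← ha j hj]
    simp only [sq]
  calc ∫ ω, (∑ j ∈ s, X j ω) ^ 2 ∂μ = ∑ j ∈ s, ∑ k ∈ s, ∫ ω, X j ω * X k ω ∂μ := by
        simp_rw [sq, sum_mul_sum]
        rw [integral_finsetSum _ fun j _ => integrable_finsetSum _ fun k _ => hprod j k]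
        exact sum_congr rfl fun j _ => integral_finsetSum _ fun k _ => hprod j k
    _ = #s * a + #s * (#s - 1) * b := by
        rw [sum_congr rfl hrow, sum_const, nsmul_eq_mul]
        ring

def Exchangeable {β : Type*} [MeasurableSpace β] (X : ι → Ω → β) (μ : Measure Ω) : Prop :=
  ∀ σ : Equiv.Perm ι, μ.map (fun ω j => X (σ j) ω) = μ.map (fun ω j => X j ω)

namespace Exchangeable

variable {X : ι → Ω → ℝ}

theorem integral_comp_perm (hX : Exchangeable X μ) (hXm : ∀ i, Measurable (X i))
    (σ : Equiv.Perm ι) {g : (ι → ℝ) → ℝ} (hg : Measurable g) :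
    ∫ ω, g (fun j => X (σ j) ω) ∂μ = ∫ ω, g (fun j => X j ω) ∂μ := by
  rw [← integral_map (measurable_pi_lambda _ fun j => hXm (σ j)).aemeasurable
      hg.aestronglyMeasurable,
    ← integral_map (measurable_pi_lambda _ hXm).aemeasurable hg.aestronglyMeasurable, hX σ]

theorem integral_sq_eq (hX : Exchangeable X μ) (hXm : ∀ i, Measurable (X i)) (j k : ι) :
    ∫ ω, X j ω ^ 2 ∂μ = ∫ ω, X k ω ^ 2 ∂μ := by
  classical
  simpa using hX.integral_comp_perm hXm (Equiv.swap j k) (g := fun x => x k ^ 2) (by fun_prop)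

theorem integral_mul_eq (hX : Exchangeable X μ) (hXm : ∀ i, Measurable (X i)) {j k k' : ι}
    (hk : j ≠ k) (hk' : j ≠ k') :
    ∫ ω, X j ω * X k ω ∂μ = ∫ ω, X j ω * X k' ω ∂μ := by
  classical
  simpa [Equiv.swap_apply_of_ne_of_ne hk hk'] using
    hX.integral_comp_perm hXm (Equiv.swap k k') (g := fun x => x j * x k') (by fun_prop)

theorem setIntegral_eq_of_measurableSet_iSup (hX : Exchangeable X μ) (hXm : ∀ i, Measurable (X i))
    {p : ι → Prop} {j k : ι} (hj : ¬ p j) (hk : ¬ p k) {s : Set Ω}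
    (hs : MeasurableSet[⨆ (l) (_ : p l), MeasurableSpace.comap (X l) inferInstance] s) :
    ∫ ω in s, X j ω ∂μ = ∫ ω in s, X k ω ∂μ := by
  classical
  have hW : Measurable fun ω l => X l ω := measurable_pi_lambda _ hXm
  rw [iSup_comap_eq_comap_cylinderEvents] at hs
  obtain ⟨B, hB, rfl⟩ := hs
  obtain ⟨hBm, hBinv⟩ := cylinderEvents_le_invariants_comp_perm (σ := Equiv.swap j k)
    (fun l hl => Equiv.swap_apply_of_ne_of_ne (ne_of_mem_of_not_mem hl hj)
      (ne_of_mem_of_not_mem hl hk)) B hB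
  have h := hX.integral_comp_perm hXm (Equiv.swap j k) ((measurable_pi_apply k).indicator hBm)
  rw [← integral_indicator (hW hBm), ← integral_indicator (hW hBm)]
  calc ∫ ω, ((fun ω l => X l ω) ⁻¹' B).indicator (X j) ω ∂μ
      = ∫ ω, B.indicator (fun x => x k) (fun l => X (Equiv.swap j k l) ω) ∂μ := by
        congr 1 with ω
        have hmem : (fun l => X (Equiv.swap j k l) ω) ∈ B ↔ (fun l => X l ω) ∈ B :=
          Set.ext_iff.mp hBinv (fun l => X l ω)
        simp only [Set.indicator_apply, Set.mem_preimage, hmem, Equiv.swap_apply_right]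
    _ = ∫ ω, ((fun ω l => X l ω) ⁻¹' B).indicator (X k) ω ∂μ := h

theorem condExp_ae_eq [IsFiniteMeasure μ] (hX : Exchangeable X μ) (hXm : ∀ i, Measurable (X i))
    (hXint : ∀ i, Integrable (X i) μ) {p : ι → Prop} {j k : ι} (hj : ¬ p j) (hk : ¬ p k) :
    μ[X j | ⨆ (l) (_ : p l), MeasurableSpace.comap (X l) inferInstance]
      =ᵐ[μ] μ[X k | ⨆ (l) (_ : p l), MeasurableSpace.comap (X l) inferInstance] := by
  have hm : ⨆ (l) (_ : p l), MeasurableSpace.comap (X l) inferInstance ≤ mΩ :=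
    iSup₂_le fun l _ => (hXm l).comap_le
  refine ae_eq_condExp_of_forall_setIntegral_eq hm (hXint k)
    (fun s _ _ => integrable_condExp.integrableOn) (fun s hs _ => ?_)
    stronglyMeasurable_condExp.aestronglyMeasurable
  rw [setIntegral_condExp hm (hXint j) hs, hX.setIntegral_eq_of_measurableSet_iSup hXm hj hk hs]

variable [Fintype ι]

theorem integral_sq_eq_div_card [IsProbabilityMeasure μ] (hX : Exchangeable X μ)
    (hXm : ∀ i, Measurable (X i)) (hX2 : ∀ i, MemLp (X i) 2 μ) {c : ℝ}
    (hsumsq : ∀ᵐ ω ∂μ, ∑ j, X j ω ^ 2 = c) (j : ι) :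
    ∫ ω, X j ω ^ 2 ∂μ = c / Fintype.card ι := by
  have hcard : (Fintype.card ι : ℝ) ≠ 0 := by
    have : Nonempty ι := ⟨j⟩
    positivity
  have hsum : ∑ k, ∫ ω, X k ω ^ 2 ∂μ = c := by
    rw [← integral_finsetSum _ fun k _ => (hX2 k).integrable_sq, integral_congr_ae hsumsq]
    simp
  rw [eq_div_iff hcard, ← hsum, mul_comm]
  simp [hX.integral_sq_eq hXm _ j]

theorem integral_mul_eq_neg_div (hX : Exchangeable X μ) (hXm : ∀ i, Measurable (X i))
    (hX2 : ∀ i, MemLp (X i) 2 μ) (hsum : ∀ᵐ ω ∂μ, ∑ j, X j ω = 0) {j k : ι} (hjk : j ≠ k) :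
    ∫ ω, X j ω * X k ω ∂μ = -(∫ ω, X j ω ^ 2 ∂μ) / (Fintype.card ι - 1) := by
  classical
  have hprod : ∀ k', Integrable (fun ω => X j ω * X k' ω) μ := fun k' =>
    memLp_one_iff_integrable.mp ((hX2 k').mul (hX2 j))
  have hzero : ∑ k', ∫ ω, X j ω * X k' ω ∂μ = 0 := by
    rw [← integral_finsetSum _ fun k' _ => hprod k']
    refine integral_eq_zero_of_ae (hsum.mono fun ω h => ?_)
    simp [← mul_sum, h]
  have hcard : (Fintype.card ι : ℝ) - 1 ≠ 0 := by
    have : 1 < Fintype.card ι := Fintype.one_lt_card_iff.mpr ⟨j, k, hjk⟩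
    have : (1 : ℝ) < Fintype.card ι := by exact_mod_cast this
    linarith
  rw [← add_sum_erase _ _ (mem_univ j),
    sum_congr rfl fun k' hk' => hX.integral_mul_eq hXm (ne_of_mem_erase hk').symm hjk,
    sum_const, card_erase_of_mem (mem_univ j), card_univ,
    nsmul_eq_mul, Nat.cast_sub (Fintype.card_pos_iff.mpr ⟨j⟩), Nat.cast_one] at hzero
  rw [eq_div_iff hcard]
  simp only [sq]
  linarith

theorem condExp_ae_eq_neg_sum [IsFiniteMeasure μ] (hX : Exchangeable X μ)
    (hXm : ∀ i, Measurable (X i)) (hXint : ∀ i, Integrable (X i) μ)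
    (hsum : ∀ᵐ ω ∂μ, ∑ j, X j ω = 0) {p : ι → Prop} [DecidablePred p] {i : ι} (hi : ¬ p i) :
    μ[X i | ⨆ (l) (_ : p l), MeasurableSpace.comap (X l) inferInstance]
      =ᵐ[μ] fun ω => -(#{j | ¬ p j} : ℝ)⁻¹ * ∑ j with p j, X j ω := by
  set m := ⨆ (l) (_ : p l), MeasurableSpace.comap (X l) inferInstance
  have hm : m ≤ mΩ := iSup₂_le fun l _ => (hXm l).comap_le
  have hsumCE : ∀ᵐ ω ∂μ, ∑ j, μ[X j | m] ω = 0 := by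
    have hsum' : ∑ j, X j =ᵐ[μ] 0 := hsum.mono fun ω h => by simpa using h
    filter_upwards [condExp_finsetSum (fun j _ => hXint j) m, condExp_congr_ae (m := m) hsum']
      with ω h h0
    rw [← Finset.sum_apply, ← h, h0, condExp_zero, Pi.zero_apply]
  have hpast : ∀ j, p j → μ[X j | m] = X j := fun j hj =>
    condExp_of_stronglyMeasurable hm
      (measurable_iff_comap_le.mpr (le_iSup₂ (f := fun l (_ : p l) =>
        MeasurableSpace.comap (X l) inferInstance) j hj)).stronglyMeasurable (hXint j)
  have hfuture : ∀ᵐ ω ∂μ, ∀ j, ¬ p j → μ[X j | m] ω = μ[X i | m] ω :=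
    ae_all_iff.mpr fun j => by
      by_cases hj : p j
      · exact ae_of_all _ fun _ h => absurd hj h
      · exact (hX.condExp_ae_eq hXm hXint hj hi).mono fun _ h _ => h
  have hcard : (#{j | ¬ p j} : ℝ) ≠ 0 :=
    Nat.cast_ne_zero.mpr (card_ne_zero_of_mem (mem_filter.mpr ⟨mem_univ i, hi⟩))
  filter_upwards [hsumCE, hfuture] with ω h0 hf
  rw [← sum_filter_add_sum_filter_not univ p,
    sum_congr rfl fun j hj => by rw [hpast j (mem_filter.mp hj).2],
    sum_congr rfl fun j hj => hf j (mem_filter.mp hj).2, sum_const, nsmul_eq_mul] at h0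
  field_simp
  linarith

end Exchangeable

end ProbabilityTheory

end

-- `i` is zero-based: the right-hand side is `(i-1)/((n-i+1)(n-1))` for a one-based index.
/-- For exchangeable random variables `X_1, …, X_n` (`n ≥ 2`, indexed by `Fin n`) with
finite second moments, `∑ X_j = 0` and `∑ X_j² = n` almost surely, the second moment of the
conditional expectation of `X i` given the previous coordinates equals
`i / ((n-i)(n-1))` (zero-based `i`, matching `(i-1)/((n-i+1)(n-1))` for one-based indexing). -/
theorem exchangeable_condexp_sq_moment
    {Ω : Type*} [MeasureSpace Ω] [IsProbabilityMeasure (ℙ : Measure Ω)]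
    {n : ℕ} (hn : 2 ≤ n) (X : Fin n → Ω → ℝ)
    (hXm : ∀ i, Measurable (X i))
    (hXsq : ∀ i, MemLp (X i) 2 ℙ)
    (hexch : ∀ σ : Equiv.Perm (Fin n),
      Measure.map (fun ω => fun j => X (σ j) ω) ℙ = Measure.map (fun ω => fun j => X j ω) ℙ)
    (hsum : ∀ᵐ ω ∂ℙ, ∑ j, X j ω = 0)
    (hsumsq : ∀ᵐ ω ∂ℙ, ∑ j, X j ω ^ 2 = (n : ℝ))
    (i : Fin n) :
    ∫ ω, (ℙ[X i | ⨆ (j : Fin n) (_ : j < i), MeasurableSpace.comap (X j) inferInstance]) ω ^ 2 ∂ℙ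
      = (i : ℝ) / (((n : ℝ) - i) * ((n : ℝ) - 1)) := by
  have hX : Exchangeable X ℙ := hexch
  have hvar : ∀ j, ∫ ω, X j ω ^ 2 ∂ℙ = 1 := fun j => by
    rw [hX.integral_sq_eq_div_card hXm hXsq hsumsq, Fintype.card_fin, div_self (by positivity)]
  have hcov : ∀ j k, j ≠ k → ∫ ω, X j ω * X k ω ∂ℙ = -1 / ((n : ℝ) - 1) := fun j k hjk => by
    rw [hX.integral_mul_eq_neg_div hXm hXsq hsum hjk, hvar, Fintype.card_fin]
  have hpast : #{j : Fin n | j < i} = (i : ℕ) := by simp [filter_gt_eq_Iio]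
  have hfuture : #{j : Fin n | ¬ j < i} = n - i := by simp [not_lt, filter_le_eq_Ici]
  have hn1 : (n : ℝ) - 1 ≠ 0 := by
    have : (2 : ℝ) ≤ n := by exact_mod_cast hn
    linarith
  have hni : (n : ℝ) - i ≠ 0 := sub_ne_zero.mpr (by exact_mod_cast i.isLt.ne')
  calc _ = ∫ ω, (-(#{j : Fin n | ¬ j < i} : ℝ)⁻¹ * ∑ j with j < i, X j ω) ^ 2 ∂ℙ :=
        integral_congr_ae <| (hX.condExp_ae_eq_neg_sum hXm (fun j => (hXsq j).integrable
          one_le_two) hsum (p := (· < i)) (lt_irrefl i)).mono fun ω h => by rw [h]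
    _ = ((n : ℝ) - i)⁻¹ ^ 2 * (i + i * (i - 1) * (-1 / ((n : ℝ) - 1))) := by
        simp_rw [mul_pow, neg_sq]
        rw [integral_const_mul, integral_sum_sq_eq hXsq _ (fun j _ => hvar j)
          (fun j _ k _ => hcov j k), hpast, hfuture, Nat.cast_sub i.isLt.le, mul_one]
    _ = (i : ℝ) / (((n : ℝ) - i) * ((n : ℝ) - 1)) := by
        field_simp
        ring
end

section
/- With U as above (U_i = V_i - sum_{j<i} V_j/(n-j) for i.i.d. standard Gaussians V_j) and Z̃_i = Z_i - (1/n) sum_k Z_k for i.i.d. standard Gaussians Z_k, let σ̃_{ij} = Cov(U_i,U_j) and σ_{ij} = Cov(Z̃_i,Z̃_j) (so σ_{ii} = (n-1)/n, σ_{ij} = -1/n for i≠j). Then sum_{i,j=1}^n |σ_{ij} - σ̃_{ij}| <= 3 + 2 sum_{k=2}^{n-1} 1/k, which is at most 3 sqrt(n). -/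
open MeasureTheory ProbabilityTheory Finset
open scoped Matrix NNReal ENNReal

/-!
Write `U = A V`, where `A = gramSchmidtMatrix n` is unit lower triangular with `A i k = -1/(n-1-k)`
below the diagonal. Since `V` is orthonormal in `L²`, `Cov U = A Aᵀ`. The diagonal entries of
`A Aᵀ` are at least `1 > (n-1)/n`, and the off-diagonal ones are at most `-1/n` by the telescoping
bound `1/y² ≤ 1/(y-1) - 1/y`; so the sign of every entry of `S - A Aᵀ` is known, and the total
discrepancy is `∑ (S - A Aᵀ) - 2 tr (S - A Aᵀ)`. Every column of `A` except the last one sums to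
zero, hence `∑ A Aᵀ = 1`, while `tr (A Aᵀ) = n + H_{n-1}`. Together with `∑ S = 0` and
`tr S = n - 1` the discrepancy equals `1 + 2 H_{n-1}` exactly. Finally,
`1/k ≤ 3/2 (√k - √(k-1))` for `k ≥ 2` telescopes to the bound `3 √n`.
-/

section Covariance

variable {Ω : Type*} [MeasurableSpace Ω] {μ : Measure Ω}

lemma integral_mulVec_mul_mulVec {ι κ : Type*} [Fintype κ] {V : κ → Ω → ℝ}
    (hV : ∀ k l, Integrable (fun ω ↦ V k ω * V l ω) μ) (A : Matrix ι κ ℝ) (i j : ι) :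
    ∫ ω, (A *ᵥ fun k ↦ V k ω) i * (A *ᵥ fun k ↦ V k ω) j ∂μ
      = (A * Matrix.of (fun k l ↦ ∫ ω, V k ω * V l ω ∂μ) * Aᵀ) i j := by
  have hexpand : ∀ ω, (A *ᵥ fun k ↦ V k ω) i * (A *ᵥ fun k ↦ V k ω) j
      = ∑ k, ∑ l, A i k * A j l * (V k ω * V l ω) := fun ω ↦ by
    simp only [Matrix.mulVec, dotProduct, sum_mul_sum, mul_mul_mul_comm]
  simp_rw [hexpand]
  rw [integral_finsetSum _ fun k _ ↦ integrable_finsetSum _ fun l _ ↦ (hV k l).const_mul _]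
  simp only [Matrix.mul_apply, Matrix.of_apply, Matrix.transpose_apply, sum_mul]
  rw [sum_comm]
  refine sum_congr rfl fun k _ ↦ ?_
  rw [integral_finsetSum _ fun l _ ↦ (hV k l).const_mul _]
  refine sum_congr rfl fun l _ ↦ ?_
  rw [integral_const_mul]
  ring

namespace ProbabilityTheory.HasLaw

variable {X : Ω → ℝ}

lemma memLp_of_gaussianReal {m : ℝ} {v : ℝ≥0} (hX : HasLaw X (gaussianReal m v) μ)
    {p : ℝ≥0∞} (hp : p ≠ ∞) : MemLp X p μ :=
  (memLp_map_measure_iff aestronglyMeasurable_id hX.aemeasurable).1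
    (hX.map_eq ▸ memLp_id_gaussianReal' p hp)

lemma integral_sq_of_gaussianReal {v : ℝ≥0} (hX : HasLaw X (gaussianReal 0 v) μ) :
    ∫ ω, X ω ^ 2 ∂μ = v := by
  rw [← variance_of_integral_eq_zero hX.aemeasurable (by simp [hX.integral_eq]), hX.variance_eq]
  simp

end ProbabilityTheory.HasLaw

lemma integral_mul_eq_one_apply_of_iIndepFun {ι : Type*} [DecidableEq ι] {V : ι → Ω → ℝ}
    (hV : iIndepFun V μ) (hlaw : ∀ i, HasLaw (V i) (gaussianReal 0 1) μ) (k l : ι) :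
    ∫ ω, V k ω * V l ω ∂μ = (1 : Matrix ι ι ℝ) k l := by
  rcases eq_or_ne k l with rfl | hkl
  · simpa [sq] using (hlaw k).integral_sq_of_gaussianReal
  · have hprod := (hV.indepFun hkl).integral_mul_eq_mul_integral
      (hlaw k).aemeasurable.aestronglyMeasurable (hlaw l).aemeasurable.aestronglyMeasurable
    simpa [Matrix.one_apply_ne hkl, (hlaw k).integral_eq] using hprod

end Covariance

namespace Matrix

variable {ι κ R : Type*} [Fintype ι] [Fintype κ] [CommSemiring R]

lemma sum_sum_mul_transpose_self_apply (A : Matrix ι κ R) :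
    ∑ i, ∑ j, (A * Aᵀ) i j = ∑ k, (∑ i, A i k) ^ 2 := by
  simp only [mul_apply, transpose_apply, sq, sum_mul_sum]
  exact (Finset.sum_congr rfl fun _ _ ↦ Finset.sum_comm).trans Finset.sum_comm

lemma trace_mul_transpose_self (A : Matrix ι κ R) :
    (A * Aᵀ).trace = ∑ k, ∑ i, A i k ^ 2 := by
  simp only [trace, diag_apply, mul_apply, transpose_apply, sq]
  exact Finset.sum_comm

lemma sum_sum_abs_eq_sub_two_mul_trace [DecidableEq ι] {M : Matrix ι ι ℝ}
    (hdiag : ∀ i, M i i ≤ 0) (hoff : ∀ i j, i ≠ j → 0 ≤ M i j) :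
    ∑ i, ∑ j, |M i j| = ∑ i, ∑ j, M i j - 2 * M.trace := by
  have hentry : ∀ i j, |M i j| = M i j - 2 * if i = j then M i j else 0 := by
    intro i j
    split_ifs with h
    · subst h; rw [abs_of_nonpos (hdiag i)]; ring
    · rw [abs_of_nonneg (hoff i j h)]; ring
  simp only [hentry, sum_sub_distrib, ← mul_sum, sum_ite_eq, mem_univ, if_true, trace,
    diag_apply]

end Matrix

lemma Fin.sum_comp_sub_one_sub_eq_sum_range {n : ℕ} (h : ℝ → ℝ) :
    ∑ k : Fin n, h ((n : ℝ) - 1 - k) = ∑ k ∈ range n, h k := by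
  rw [← Fin.sum_univ_eq_sum_range, ← Equiv.sum_comp Fin.revPerm]
  refine sum_congr rfl fun k _ ↦ congrArg h ?_
  rw [Fin.revPerm_apply, Fin.val_rev, Nat.cast_sub k.isLt]
  push_cast
  ring

lemma inv_sq_le_inv_sub_one_sub_inv {y : ℝ} (hy : 1 < y) : (y⁻¹) ^ 2 ≤ (y - 1)⁻¹ - y⁻¹ := by
  have hy0 : 0 < y - 1 := sub_pos.2 hy
  have hdiff : (y - 1)⁻¹ - y⁻¹ = ((y - 1) * y)⁻¹ := by field_simp; ring
  rw [hdiff, inv_pow]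
  exact inv_anti₀ (by positivity) (by nlinarith)

lemma sum_range_inv_sq_le (N : ℝ) : ∀ i : ℕ, (i : ℝ) + 2 ≤ N →
    ∑ k ∈ range i, ((N - 1 - k)⁻¹) ^ 2 ≤ (N - 1 - i)⁻¹ - N⁻¹
  | 0, h => by
    simp only [range_zero, sum_empty, CharP.cast_eq_zero, sub_zero, sub_nonneg]
    exact inv_anti₀ (by linarith) (by linarith)
  | i + 1, h => by
    push_cast at h ⊢
    rw [sum_range_succ]
    have ih := sum_range_inv_sq_le N i (by linarith)
    have hstep := inv_sq_le_inv_sub_one_sub_inv (y := N - 1 - i) (by linarith)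
    rw [show N - 1 - i - 1 = N - 1 - (i + 1) by ring] at hstep
    linarith

noncomputable def gramSchmidtMatrix (n : ℕ) : Matrix (Fin n) (Fin n) ℝ :=
  Matrix.of fun i k ↦ if i = k then 1 else if k < i then -((n : ℝ) - 1 - k)⁻¹ else 0

namespace gramSchmidtMatrix

variable {n : ℕ}

lemma mulVec_apply (v : Fin n → ℝ) (i : Fin n) :
    (gramSchmidtMatrix n *ᵥ v) i = v i - ∑ k ∈ univ.filter (· < i), v k / ((n : ℝ) - 1 - k) := by
  have hterm : ∀ k, gramSchmidtMatrix n i k * v k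
      = (if i = k then v k else 0) - if k < i then v k / ((n : ℝ) - 1 - k) else 0 := by
    intro k
    simp only [gramSchmidtMatrix, Matrix.of_apply]
    split_ifs <;> simp_all [div_eq_inv_mul]
  simp only [Matrix.mulVec, dotProduct, hterm, sum_sub_distrib, sum_ite_eq, mem_univ, if_true,
    sum_filter]

lemma sum_comp_col (f : ℝ → ℝ) (hf : f 0 = 0) (k : Fin n) :
    ∑ i, f (gramSchmidtMatrix n i k) = f 1 + ((n : ℝ) - 1 - k) * f (-((n : ℝ) - 1 - k)⁻¹) := by
  have hterm : ∀ i, f (gramSchmidtMatrix n i k)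
      = (if i = k then f 1 else 0) + if k < i then f (-((n : ℝ) - 1 - k)⁻¹) else 0 := by
    intro i
    simp only [gramSchmidtMatrix, Matrix.of_apply]
    split_ifs <;> simp_all
  have hcard : ((#(Ioi k) : ℕ) : ℝ) = (n : ℝ) - 1 - k := by
    rw [Fin.card_Ioi, Nat.sub_sub, Nat.cast_sub (by omega)]
    push_cast
    ring
  rw [sum_congr rfl fun i _ ↦ hterm i, sum_add_distrib, sum_ite_eq', if_pos (mem_univ k),
    ← sum_filter, filter_lt_eq_Ioi, sum_const, nsmul_eq_mul, hcard]

lemma mul_transpose_apply_of_lt {i j : Fin n} (hij : i < j) :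
    (gramSchmidtMatrix n * (gramSchmidtMatrix n)ᵀ) i j
      = -((n : ℝ) - 1 - i)⁻¹ + ∑ m ∈ range i, (((n : ℝ) - 1 - m)⁻¹) ^ 2 := by
  have hterm : ∀ k, gramSchmidtMatrix n i k * gramSchmidtMatrix n j k
      = (if k = i then -((n : ℝ) - 1 - i)⁻¹ else 0)
        + if k < i then (((n : ℝ) - 1 - k)⁻¹) ^ 2 else 0 := by
    intro k
    simp only [gramSchmidtMatrix, Matrix.of_apply]
    rcases lt_trichotomy k i with hki | rfl | hik
    · simp [hki.ne, hki.ne', (hki.trans hij).ne', hki, hki.trans hij, sq]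
    · simp [hij.ne', hij]
    · simp [hik.ne, hik.ne', not_lt.2 hik.le]
  simp only [Matrix.mul_apply, Matrix.transpose_apply, hterm, sum_add_distrib, sum_ite_eq',
    mem_univ, if_true, ← sum_filter, filter_gt_eq_Iio]
  rw [← Nat.Iio_eq_range, ← Fin.map_valEmbedding_Iio, sum_map]
  rfl

lemma mul_transpose_apply_le_of_ne {i j : Fin n} (hij : i ≠ j) :
    (gramSchmidtMatrix n * (gramSchmidtMatrix n)ᵀ) i j ≤ -(n : ℝ)⁻¹ := by
  wlog hlt : i < j generalizing i j
  · rw [← (Matrix.isSymm_mul_transpose_self _).apply]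
    exact this hij.symm (lt_of_le_of_ne (not_lt.1 hlt) hij.symm)
  have hi : (i : ℝ) + 2 ≤ n := by exact_mod_cast (show (i : ℕ) + 2 ≤ n by omega)
  rw [mul_transpose_apply_of_lt hlt]
  linarith [sum_range_inv_sq_le n i hi]

lemma one_le_mul_transpose_apply_self (i : Fin n) :
    1 ≤ (gramSchmidtMatrix n * (gramSchmidtMatrix n)ᵀ) i i := by
  have hsq : ∀ k ∈ univ, 0 ≤ gramSchmidtMatrix n i k * gramSchmidtMatrix n i k :=
    fun k _ ↦ mul_self_nonneg _
  simpa [Matrix.mul_apply, gramSchmidtMatrix] using single_le_sum hsq (mem_univ i)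

lemma sum_sum_mul_transpose (hn : 1 ≤ n) :
    ∑ i, ∑ j, (gramSchmidtMatrix n * (gramSchmidtMatrix n)ᵀ) i j = 1 := by
  have hcol : ∀ k : Fin n,
      ∑ i, gramSchmidtMatrix n i k = 1 - ((n : ℝ) - 1 - k) * ((n : ℝ) - 1 - k)⁻¹ :=
    fun k ↦ by simpa [sub_eq_add_neg] using sum_comp_col id rfl k
  obtain ⟨m, rfl⟩ := Nat.exists_eq_add_of_le' hn
  rw [Matrix.sum_sum_mul_transpose_self_apply, sum_congr rfl fun k _ ↦ by rw [hcol k],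
    Fin.sum_comp_sub_one_sub_eq_sum_range (fun x ↦ (1 - x * x⁻¹) ^ 2), sum_range_succ']
  have hcancel (k : ℕ) : ((k : ℝ) + 1) * ((k : ℝ) + 1)⁻¹ = 1 :=
    mul_inv_cancel₀ (Nat.cast_add_one_ne_zero k)
  simp [hcancel]

/-- The `k = 0` term of the sum is the junk value `0⁻¹ = 0`, contributed by the last column. -/
lemma trace_mul_transpose :
    (gramSchmidtMatrix n * (gramSchmidtMatrix n)ᵀ).trace = n + ∑ k ∈ range n, (k : ℝ)⁻¹ := by
  have hmul : ∀ x : ℝ, x * (-x⁻¹) ^ 2 = x⁻¹ := by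
    intro x
    rcases eq_or_ne x 0 with rfl | hx
    · simp
    · field_simp
  have hcol : ∀ k : Fin n, ∑ i, gramSchmidtMatrix n i k ^ 2 = 1 + ((n : ℝ) - 1 - k)⁻¹ :=
    fun k ↦ by rw [sum_comp_col (· ^ 2) (zero_pow two_ne_zero) k, hmul, one_pow]
  rw [Matrix.trace_mul_transpose_self, sum_congr rfl fun k _ ↦ hcol k, sum_add_distrib,
    Fin.sum_comp_sub_one_sub_eq_sum_range (·⁻¹)]
  simp

lemma sum_sum_abs_sub_mul_transpose (hn : 1 ≤ n) {S : Matrix (Fin n) (Fin n) ℝ}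
    (hS : ∀ i j, S i j = (1 : Matrix (Fin n) (Fin n) ℝ) i j - (n : ℝ)⁻¹) :
    ∑ i, ∑ j, |(S - gramSchmidtMatrix n * (gramSchmidtMatrix n)ᵀ) i j|
      = 1 + 2 * ∑ k ∈ range n, (k : ℝ)⁻¹ := by
  set G := gramSchmidtMatrix n * (gramSchmidtMatrix n)ᵀ with hG
  have hn0 : (n : ℝ) ≠ 0 := by positivity
  have hSsum : ∑ i, ∑ j, S i j = 0 := by simp [hS, sum_sub_distrib, Matrix.one_apply, hn0]
  have hStrace : S.trace = n - 1 := by simp [Matrix.trace, hS, hn0]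
  have hdiag (i : Fin n) : (S - G) i i ≤ 0 := by
    have hSii : S i i ≤ 1 := by rw [hS]; simp
    linarith [one_le_mul_transpose_apply_self i, Matrix.sub_apply S G i i]
  have hoff (i j : Fin n) (hij : i ≠ j) : 0 ≤ (S - G) i j := by
    rw [Matrix.sub_apply, hS, Matrix.one_apply_ne hij]
    linarith [mul_transpose_apply_le_of_ne hij]
  rw [Matrix.sum_sum_abs_eq_sub_two_mul_trace hdiag hoff]
  simp only [Matrix.sub_apply, sum_sub_distrib, Matrix.trace_sub, hSsum, hStrace, hG,
    sum_sum_mul_transpose hn, trace_mul_transpose]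
  ring

end gramSchmidtMatrix

lemma sum_range_inv_le (n : ℕ) :
    ∑ k ∈ range n, (k : ℝ)⁻¹ ≤ 1 + ∑ k ∈ Icc 2 (n - 1), (1 : ℝ) / k := by
  rcases n with _ | _ | m
  · simp
  · simp
  · rw [sum_range_succ', sum_range_succ', Nat.add_sub_cancel, ← Ico_add_one_right_eq_Icc,
      sum_Ico_eq_sum_range, show m + 1 + 1 - 2 = m by omega]
    simp [add_comm, add_left_comm, one_add_one_eq_two]

lemma inv_le_three_halves_mul_sqrt_sub_sqrt {x : ℝ} (hx : 1 ≤ x) :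
    (x + 1)⁻¹ ≤ 3 / 2 * (√(x + 1) - √x) := by
  set a := √(x + 1)
  set b := √x
  have ha : a ^ 2 = x + 1 := Real.sq_sqrt (by linarith)
  have hb : b ^ 2 = x := Real.sq_sqrt (by linarith)
  have hab : 0 ≤ a - b := sub_nonneg.2 (Real.sqrt_le_sqrt (by linarith))
  have hconj : (a - b) * (a + b) = 1 := by nlinarith
  have ha43 : 4 / 3 ≤ a := by nlinarith [Real.sqrt_nonneg (x + 1)]
  have hsum : a + b ≤ 3 / 2 * a ^ 2 := by nlinarith
  rw [inv_le_iff_one_le_mul₀ (by linarith), ← ha]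
  nlinarith [mul_le_mul_of_nonneg_left hsum hab]

lemma sum_Icc_two_inv_le (m : ℕ) (hm : 1 ≤ m) :
    ∑ k ∈ Icc 2 m, (1 : ℝ) / k ≤ 3 / 2 * (√m - 1) := by
  induction m, hm using Nat.le_induction with
  | base => simp
  | succ m hm ih =>
    rw [sum_Icc_succ_top (by omega), one_div]
    have hstep := inv_le_three_halves_mul_sqrt_sub_sqrt (x := m) (by exact_mod_cast hm)
    push_cast
    linarith

lemma three_add_two_mul_sum_Icc_le_three_mul_sqrt (n : ℕ) (hn : 1 ≤ n) :
    3 + 2 * (∑ k ∈ Icc 2 (n - 1), (1 : ℝ) / k) ≤ 3 * √n := by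
  obtain ⟨m, rfl⟩ := Nat.exists_eq_add_of_le' hn
  rcases Nat.eq_zero_or_pos m with rfl | hm
  · simp
  have hsqrt : √(m : ℝ) ≤ √((m + 1 : ℕ) : ℝ) := Real.sqrt_le_sqrt (by push_cast; linarith)
  have hsum := sum_Icc_two_inv_le m hm
  simp only [Nat.add_sub_cancel]
  linarith

/-- Indices are zero-based: `(n : ℝ) - 1 - j` is the paper's `n - j`. -/
theorem cov_discrepancy_bound
    {Ω : Type*} [MeasureSpace Ω] [IsProbabilityMeasure (ℙ : Measure Ω)]
    {n : ℕ} (hn : 1 ≤ n) (V : Fin n → Ω → ℝ)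
    (hVm : ∀ i, Measurable (V i))
    (hViid : iIndepFun V ℙ)
    (hVgauss : ∀ i, Measure.map (V i) ℙ = gaussianReal 0 1)
    (U : Fin n → Ω → ℝ)
    (hU : ∀ i ω, U i ω = V i ω
      - ∑ j ∈ Finset.univ.filter (· < i), V j ω / ((n : ℝ) - 1 - j))
    (St S : Matrix (Fin n) (Fin n) ℝ)
    (hSt : ∀ i j, St i j = ∫ ω, U i ω * U j ω ∂ℙ)
    (hS : ∀ i j, S i j = if i = j then ((n : ℝ) - 1) / n else -(1 / (n : ℝ))) :
    (∑ i, ∑ j, |S i j - St i j| ≤ 3 + 2 * ∑ k ∈ Finset.Icc 2 (n - 1), (1 : ℝ) / k)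
    ∧ 3 + 2 * (∑ k ∈ Finset.Icc 2 (n - 1), (1 : ℝ) / k) ≤ 3 * Real.sqrt n := by
  refine ⟨?_, three_add_two_mul_sum_Icc_le_three_mul_sqrt n hn⟩
  have hlaw : ∀ i, HasLaw (V i) (gaussianReal 0 1) ℙ := fun i ↦ ⟨(hVm i).aemeasurable, hVgauss i⟩
  have hSt' : St = gramSchmidtMatrix n * (gramSchmidtMatrix n)ᵀ := by
    have hUv : ∀ i ω, U i ω = (gramSchmidtMatrix n *ᵥ fun k ↦ V k ω) i := fun i ω ↦ by
      rw [hU, gramSchmidtMatrix.mulVec_apply]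
    have hgram : Matrix.of (fun k l ↦ ∫ ω, V k ω * V l ω) = 1 :=
      Matrix.ext (integral_mul_eq_one_apply_of_iIndepFun hViid hlaw)
    have hint k l : Integrable (fun ω ↦ V k ω * V l ω) :=
      ((hlaw k).memLp_of_gaussianReal (p := 2) ENNReal.ofNat_ne_top).integrable_mul
        ((hlaw l).memLp_of_gaussianReal (p := 2) ENNReal.ofNat_ne_top)
    ext i j
    simp_rw [hSt, hUv, integral_mulVec_mul_mulVec hint, hgram, Matrix.mul_one]
  have hS' : ∀ i j, S i j = (1 : Matrix (Fin n) (Fin n) ℝ) i j - (n : ℝ)⁻¹ := fun i j ↦ by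
    have hn0 : (n : ℝ) ≠ 0 := by positivity
    rw [hS, Matrix.one_apply]
    split_ifs
    · field_simp
    · ring
  simp_rw [← Matrix.sub_apply, hSt', gramSchmidtMatrix.sum_sum_abs_sub_mul_transpose hn hS']
  linarith [sum_range_inv_le n]
end

section
/- Fix z in C with Im z = v ≠ 0, and let A(x) be a symmetric N x N real matrix depending smoothly on parameters x = (x_{ij})_{i<=j} via A(x)_{ij} = N^{-1/2} x_{min(i,j),max(i,j)}. Let G(x) = (A(x) - zI)^{-1} and h(x) = N^{-1} Tr G(x). Then for any index pairs α, β, γ: |∂_α h| <= 2 |v|^{-2} N^{-3/2}, |∂_β ∂_α h| <= 4 |v|^{-3} N^{-2}, and |∂_γ ∂_β ∂_α h| <= 6 * 2^{3/2} |v|^{-4} N^{-5/2}. -/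
open Finset

attribute [local instance] Matrix.frobeniusSeminormedAddCommGroup Matrix.frobeniusNormedSpace
  Matrix.frobeniusNormedRing Matrix.frobeniusNormedAlgebra

namespace StieltjesAux

open Matrix ContinuousLinearMap

variable {N : ℕ}

abbrev Idx (N : ℕ) := {p : Fin N × Fin N // p.1 ≤ p.2}
abbrev Vec (N : ℕ) := Idx N → ℝ
abbrev Mat (N : ℕ) := Matrix (Fin N) (Fin N) ℂ

noncomputable def Alin (N : ℕ) : Vec N →ₗ[ℝ] Mat N where
  toFun x := Matrix.of fun i j => ((x ⟨(min i j, max i j), min_le_max⟩ / Real.sqrt N : ℝ) : ℂ)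
  map_add' x y := by
    ext i j
    simp only [Matrix.of_apply, Pi.add_apply, Matrix.add_apply]
    push_cast
    ring
  map_smul' c x := by
    ext i j
    simp only [Matrix.of_apply, Pi.smul_apply, Matrix.smul_apply, RingHom.id_apply,
      smul_eq_mul, Complex.real_smul]
    push_cast
    ring

lemma Alin_apply (x : Vec N) (i j : Fin N) :
    Alin N x i j = ((x ⟨(min i j, max i j), min_le_max⟩ / Real.sqrt N : ℝ) : ℂ) := rfl

lemma Alin_isHermitian (x : Vec N) : (Alin N x).IsHermitian := by
  ext i j
  simp only [conjTranspose_apply, Alin_apply, min_comm j i, max_comm j i]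
  exact Complex.conj_ofReal _

/-- operator-norm style bound via Euclidean space -/
def OB (W : Mat N) (c : ℝ) : Prop :=
  ∀ w : EuclideanSpace ℂ (Fin N), ‖Matrix.toEuclideanLin W w‖ ≤ c * ‖w‖

lemma toEuclideanLin_mul (W W' : Mat N) (w : EuclideanSpace ℂ (Fin N)) :
    Matrix.toEuclideanLin (W * W') w
      = Matrix.toEuclideanLin W (Matrix.toEuclideanLin W' w) := by
  simp [Matrix.toEuclideanLin_apply, Matrix.mulVec_mulVec]

lemma OB.mul {W W' : Mat N} {c c' : ℝ} (h : OB W c) (h' : OB W' c') (hc : 0 ≤ c) :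
    OB (W * W') (c * c') := by
  intro w
  rw [toEuclideanLin_mul]
  calc ‖Matrix.toEuclideanLin W (Matrix.toEuclideanLin W' w)‖
      ≤ c * ‖Matrix.toEuclideanLin W' w‖ := h _
    _ ≤ c * (c' * ‖w‖) := by gcongr; exact h' w
    _ = c * c' * ‖w‖ := by ring

lemma OB.nonneg {W : Mat N} {c : ℝ} (hN : 0 < N) (h : OB W c) : 0 ≤ c := by
  have := h (EuclideanSpace.single ⟨0, hN⟩ 1)
  rw [EuclideanSpace.norm_single] at this
  simp only [norm_one, mul_one] at this
  exact le_trans (norm_nonneg _) this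

lemma euc_coord_le (w : EuclideanSpace ℂ (Fin N)) (i : Fin N) : ‖w i‖ ≤ ‖w‖ := by
  rw [EuclideanSpace.norm_eq]
  have : ‖w i‖ = Real.sqrt (‖w i‖ ^ 2) := by
    rw [Real.sqrt_sq (norm_nonneg _)]
  rw [this]
  apply Real.sqrt_le_sqrt
  exact Finset.single_le_sum (f := fun j => ‖w j‖ ^ 2) (fun j _ => sq_nonneg _)
    (Finset.mem_univ i)

lemma OB.entry {W : Mat N} {c : ℝ} (h : OB W c) (i j : Fin N) : ‖W i j‖ ≤ c := by
  have h1 := h (EuclideanSpace.single j 1)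
  rw [EuclideanSpace.norm_single, norm_one, mul_one] at h1
  refine le_trans ?_ (le_trans (euc_coord_le _ i) h1)
  apply le_of_eq
  congr 1
  have : (Matrix.toEuclideanLin W (EuclideanSpace.single j 1)) i
      = (W *ᵥ ((WithLp.equiv 2 (Fin N → ℂ)) (EuclideanSpace.single j 1))) i := by
    rw [Matrix.toEuclideanLin_apply]
    rfl
  rw [this]
  have : (WithLp.equiv 2 (Fin N → ℂ)) (EuclideanSpace.single j 1) = Pi.single j 1 := rfl
  rw [this, Matrix.mulVec_single]
  simp


noncomputable def Emat (α : Idx N) : Mat N := Alin N (Pi.single α 1)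

lemma Emat_apply (α : Idx N) (i j : Fin N) :
    Emat α i j = if (min i j, max i j) = α.1 then ((Real.sqrt N)⁻¹ : ℂ) else 0 := by
  rw [Emat, Alin_apply, Pi.single_apply]
  rcases α with ⟨p, hp⟩
  simp only [Subtype.mk.injEq]
  split_ifs with hcond
  · push_cast; rw [one_div]
  · push_cast; rw [zero_div]

lemma minmax_iff {i j k l : Fin N} (hij : i ≤ j) :
    (min k l, max k l) = (i, j) ↔ (k = i ∧ l = j) ∨ (k = j ∧ l = i) := by
  constructor
  · intro hkl
    rw [Prod.mk.injEq] at hkl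
    obtain ⟨h1, h2⟩ := hkl
    rcases le_total k l with hkl' | hkl'
    · left
      constructor
      · rw [← h1, min_eq_left hkl']
      · rw [← h2, max_eq_right hkl']
    · right
      constructor
      · rw [← h2, max_eq_left hkl']
      · rw [← h1, min_eq_right hkl']
  · rintro (⟨rfl, rfl⟩ | ⟨rfl, rfl⟩)
    · rw [min_eq_left hij, max_eq_right hij]
    · rw [min_comm, max_comm, min_eq_left hij, max_eq_right hij]

lemma Emat_eq (i j : Fin N) (hij : i ≤ j) :
    Emat ⟨(i, j), hij⟩ =
      if hd : i = j then ((Real.sqrt N)⁻¹ : ℂ) • Matrix.single i i 1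
      else ((Real.sqrt N)⁻¹ : ℂ) • (Matrix.single i j 1 + Matrix.single j i 1) := by
  ext k l
  rw [Emat_apply]
  have hstd : ∀ (a b : Fin N), Matrix.single a b (1:ℂ) k l
      = if a = k ∧ b = l then (1:ℂ) else 0 := fun a b => rfl
  have hcond : ((min k l, max k l) = (i, j)) ↔ ((k = i ∧ l = j) ∨ (k = j ∧ l = i)) :=
    minmax_iff hij
  split_ifs with hc hd hd
  · subst hd
    rw [hcond] at hc
    simp only [Matrix.smul_apply, hstd, smul_eq_mul]
    have : i = k ∧ i = l := by tauto
    rw [if_pos this, mul_one]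
  · rw [hcond] at hc
    simp only [Matrix.smul_apply, Matrix.add_apply, hstd, smul_eq_mul]
    rcases hc with ⟨rfl, rfl⟩ | ⟨rfl, rfl⟩
    · rw [if_pos ⟨rfl, rfl⟩, if_neg (by tauto), add_zero, mul_one]
    · rw [if_neg (by tauto), if_pos ⟨rfl, rfl⟩, zero_add, mul_one]
  · subst hd
    simp only [Matrix.smul_apply, hstd, smul_eq_mul]
    rw [if_neg, mul_zero]
    intro hkl
    exact hc (hcond.mpr (Or.inl ⟨hkl.1.symm, hkl.2.symm⟩))
  · simp only [Matrix.smul_apply, Matrix.add_apply, hstd, smul_eq_mul]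
    rw [if_neg, if_neg, add_zero, mul_zero]
    · intro hkl; exact hc (hcond.mpr (Or.inr ⟨hkl.1.symm, hkl.2.symm⟩))
    · intro hkl; exact hc (hcond.mpr (Or.inl ⟨hkl.1.symm, hkl.2.symm⟩))

lemma euc_norm_if_one (i : Fin N) (a : ℂ) :
    ‖((WithLp.equiv 2 (Fin N → ℂ)).symm (fun k => if k = i then a else 0)
      : EuclideanSpace ℂ (Fin N))‖ = ‖a‖ := by
  rw [EuclideanSpace.norm_eq]
  have : ∀ k : Fin N, ‖((WithLp.equiv 2 (Fin N → ℂ)).symm (fun k => if k = i then a else 0)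
      : EuclideanSpace ℂ (Fin N)) k‖ ^ 2 = if k = i then ‖a‖ ^ 2 else 0 := by
    intro k
    rw [WithLp.equiv_symm_apply, PiLp.toLp_apply]
    split_ifs <;> simp
  rw [Finset.sum_congr rfl (fun k _ => this k), Finset.sum_ite_eq' Finset.univ i
    (fun _ => ‖a‖ ^ 2), if_pos (Finset.mem_univ i), Real.sqrt_sq (norm_nonneg _)]

lemma euc_norm_if_two (i j : Fin N) (hij : i ≠ j) (a b : ℂ) :
    ‖((WithLp.equiv 2 (Fin N → ℂ)).symm (fun k => if k = i then a else if k = j then b else 0)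
      : EuclideanSpace ℂ (Fin N))‖ = Real.sqrt (‖a‖ ^ 2 + ‖b‖ ^ 2) := by
  rw [EuclideanSpace.norm_eq]
  congr 1
  have : ∀ k : Fin N, ‖((WithLp.equiv 2 (Fin N → ℂ)).symm
        (fun k => if k = i then a else if k = j then b else 0)
      : EuclideanSpace ℂ (Fin N)) k‖ ^ 2
      = (if k = i then ‖a‖ ^ 2 else 0) + (if k = j then ‖b‖ ^ 2 else 0) := by
    intro k
    rw [WithLp.equiv_symm_apply, PiLp.toLp_apply]
    by_cases h1 : k = i
    · subst h1; rw [if_pos rfl, if_pos rfl, if_neg hij, add_zero]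
    · rw [if_neg h1, if_neg h1, zero_add]
      split_ifs <;> simp
  rw [Finset.sum_congr rfl (fun k _ => this k), Finset.sum_add_distrib,
    Finset.sum_ite_eq' Finset.univ i (fun _ => ‖a‖ ^ 2),
    Finset.sum_ite_eq' Finset.univ j (fun _ => ‖b‖ ^ 2),
    if_pos (Finset.mem_univ i), if_pos (Finset.mem_univ j)]

lemma euc_pair_le (w : EuclideanSpace ℂ (Fin N)) (i j : Fin N) (hij : i ≠ j) :
    Real.sqrt (‖w i‖ ^ 2 + ‖w j‖ ^ 2) ≤ ‖w‖ := by
  rw [EuclideanSpace.norm_eq]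
  apply Real.sqrt_le_sqrt
  have : ‖w i‖ ^ 2 + ‖w j‖ ^ 2 = ∑ k ∈ ({i, j} : Finset (Fin N)), ‖w k‖ ^ 2 := by
    rw [Finset.sum_pair hij]
  rw [this]
  exact Finset.sum_le_sum_of_subset_of_nonneg (Finset.subset_univ _)
    (fun k _ _ => sq_nonneg _)

lemma OB_Emat (α : Idx N) : OB (Emat α) (Real.sqrt N)⁻¹ := by
  obtain ⟨⟨i, j⟩, hij⟩ := α
  have hij' : i ≤ j := hij
  intro w
  have hsq : (0:ℝ) ≤ (Real.sqrt N)⁻¹ := by positivity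
  have habs : ‖((Real.sqrt N)⁻¹ : ℂ)‖ = (Real.sqrt N)⁻¹ := by
    rw [show ((Real.sqrt N)⁻¹ : ℂ) = (((Real.sqrt N)⁻¹ : ℝ) : ℂ) by push_cast; ring,
      Complex.norm_real, Real.norm_eq_abs, abs_of_nonneg hsq]
  rw [Matrix.toEuclideanLin_apply, ← WithLp.equiv_apply, ← WithLp.equiv_symm_apply]
  rcases eq_or_ne i j with rfl | hne
  · -- diagonal case
    have hmv : Emat (N := N) ⟨(i, i), hij⟩ *ᵥ (WithLp.equiv 2 (Fin N → ℂ)) w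
        = fun k => if k = i then ((Real.sqrt N)⁻¹ : ℂ) * w i else 0 := by
      rw [Emat_eq i i hij, dif_pos rfl, Matrix.smul_mulVec, Matrix.single_mulVec]
      funext k
      rcases eq_or_ne k i with rfl | hk
      · simp [Function.update]
      · simp [Function.update, hk]
    rw [hmv, euc_norm_if_one, norm_mul, habs]
    gcongr
    exact euc_coord_le w i
  · -- off-diagonal case
    have hmv : Emat (N := N) ⟨(i, j), hij⟩ *ᵥ (WithLp.equiv 2 (Fin N → ℂ)) w
        = fun k => if k = i then ((Real.sqrt N)⁻¹ : ℂ) * w j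
            else if k = j then ((Real.sqrt N)⁻¹ : ℂ) * w i else 0 := by
      rw [Emat_eq i j hij, dif_neg hne, Matrix.smul_mulVec, Matrix.add_mulVec,
        Matrix.single_mulVec, Matrix.single_mulVec]
      funext k
      rcases eq_or_ne k i with rfl | hk
      · simp [Function.update, hne]
      · rcases eq_or_ne k j with rfl | hk2
        · simp [Function.update, hk, Ne.symm hne]
        · simp [Function.update, hk, hk2]
    rw [hmv, euc_norm_if_two i j hne]
    have : ∀ a : ℂ, ‖((Real.sqrt N)⁻¹ : ℂ) * a‖ ^ 2 = ((Real.sqrt N)⁻¹) ^ 2 * ‖a‖ ^ 2 := by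
      intro a; rw [norm_mul, habs, mul_pow]
    rw [this, this, ← mul_add, Real.sqrt_mul (by positivity), Real.sqrt_sq hsq]
    gcongr
    calc Real.sqrt (‖w j‖ ^ 2 + ‖w i‖ ^ 2) = Real.sqrt (‖w i‖ ^ 2 + ‖w j‖ ^ 2) := by
          rw [add_comm]
      _ ≤ ‖w‖ := euc_pair_le w i j hne

lemma trace_stdBasis_mul (i j : Fin N) (W : Mat N) :
    Matrix.trace (Matrix.single i j 1 * W) = W j i := by
  rw [Matrix.trace]
  have : ∀ k : Fin N, (Matrix.single i j 1 * W).diag k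
      = if k = i then W j k else 0 := by
    intro k
    rcases eq_or_ne k i with rfl | hk
    · rw [if_pos rfl, Matrix.diag_apply, Matrix.single_mul_apply_same, one_mul]
    · rw [if_neg hk, Matrix.diag_apply, Matrix.single_mul_apply_of_ne (c := (1:ℂ)) i j k k hk]
  rw [Finset.sum_congr rfl (fun k _ => this k),
    Finset.sum_ite_eq' Finset.univ i (fun k => W j k), if_pos (Finset.mem_univ i)]

lemma trace_Emat_mul_le (α : Idx N) (W : Mat N) (c : ℝ) (hW : OB W c) (hc : 0 ≤ c) :
    ‖Matrix.trace (Emat α * W)‖ ≤ 2 * (Real.sqrt N)⁻¹ * c := by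
  obtain ⟨⟨i, j⟩, hij⟩ := α
  have hsq : (0:ℝ) ≤ (Real.sqrt N)⁻¹ := by positivity
  have habs : ‖((Real.sqrt N)⁻¹ : ℂ)‖ = (Real.sqrt N)⁻¹ := by
    rw [show ((Real.sqrt N)⁻¹ : ℂ) = (((Real.sqrt N)⁻¹ : ℝ) : ℂ) by push_cast; ring,
      Complex.norm_real, Real.norm_eq_abs, abs_of_nonneg hsq]
  rcases eq_or_ne i j with rfl | hne
  · rw [Emat_eq i i hij, dif_pos rfl, Matrix.smul_mul, Matrix.trace_smul, trace_stdBasis_mul]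
    rw [norm_smul, habs]
    calc (Real.sqrt N)⁻¹ * ‖W i i‖ ≤ (Real.sqrt N)⁻¹ * c := by gcongr; exact hW.entry i i
      _ ≤ 2 * (Real.sqrt N)⁻¹ * c := by nlinarith
  · rw [Emat_eq i j hij, dif_neg hne, Matrix.smul_mul, Matrix.trace_smul, Matrix.add_mul,
      Matrix.trace_add, trace_stdBasis_mul, trace_stdBasis_mul]
    rw [norm_smul, habs]
    calc (Real.sqrt N)⁻¹ * ‖W j i + W i j‖
        ≤ (Real.sqrt N)⁻¹ * (‖W j i‖ + ‖W i j‖) := by gcongr; exact norm_add_le _ _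
      _ ≤ (Real.sqrt N)⁻¹ * (c + c) := by gcongr <;> exact hW.entry _ _
      _ = 2 * (Real.sqrt N)⁻¹ * c := by ring


variable (z : ℂ)

noncomputable def Mz (x : Vec N) : Mat N := Alin N x - z • 1

lemma lower_bound (hz : z.im ≠ 0) (x : Vec N) (w : EuclideanSpace ℂ (Fin N)) :
    |z.im| * ‖w‖ ≤ ‖Matrix.toEuclideanLin (Mz z x) w‖ := by
  rcases eq_or_ne w 0 with rfl | hw
  · simp
  have hw' : (0:ℝ) < ‖w‖ := norm_pos_iff.mpr hw
  set T0 := Matrix.toEuclideanLin (Alin N x)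
  have hTw : Matrix.toEuclideanLin (Mz z x) w = T0 w - z • w := by
    rw [Mz, map_sub, _root_.map_smul (Matrix.toEuclideanLin (𝕜 := ℂ)) z (1 : Mat N)]
    simp only [LinearMap.sub_apply, LinearMap.smul_apply]
    congr 1
    rw [show Matrix.toEuclideanLin (1 : Mat N) w = w by
      rw [Matrix.toEuclideanLin_apply, Matrix.one_mulVec]]
  set s : ℂ := inner ℂ w (Matrix.toEuclideanLin (Mz z x) w)
  have hsym : (Matrix.toEuclideanLin (Alin N x)).IsSymmetric :=
    (Matrix.isHermitian_iff_isSymmetric).mp (Alin_isHermitian x)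
  have ht : (inner ℂ w (T0 w) : ℂ).im = 0 := by
    have h1 : (inner ℂ (T0 w) w : ℂ) = inner ℂ w (T0 w) := hsym w w
    have h2 : (inner ℂ w (T0 w) : ℂ) = starRingEnd ℂ (inner ℂ (T0 w) w) :=
      (inner_conj_symm _ _).symm
    rw [h1] at h2
    have := Complex.conj_eq_iff_im.mp h2.symm
    exact this
  have hs : s = inner ℂ w (T0 w) - z * ((‖w‖ : ℂ)) ^ 2 := by
    rw [show s = inner ℂ w ((Matrix.toEuclideanLin (Mz z x)) w) from rfl,
      hTw, inner_sub_right, inner_smul_right, inner_self_eq_norm_sq_to_K]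
    rfl
  have hsim : s.im = -(z.im * ‖w‖ ^ 2) := by
    rw [hs, Complex.sub_im, ht, zero_sub, neg_inj,
      show ((‖w‖ : ℂ)) ^ 2 = ((‖w‖ ^ 2 : ℝ) : ℂ) by push_cast; ring,
      Complex.mul_im, Complex.ofReal_im, Complex.ofReal_re, mul_zero, zero_add]
  have h1 : |z.im| * ‖w‖ ^ 2 = |s.im| := by
    rw [hsim, abs_neg, abs_mul, abs_of_nonneg (sq_nonneg (‖w‖))]
  have h2 : |s.im| ≤ ‖s‖ := Complex.abs_im_le_norm s
  have h3 : ‖s‖ ≤ ‖w‖ * ‖Matrix.toEuclideanLin (Mz z x) w‖ := by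
    exact norm_inner_le_norm _ _
  nlinarith [norm_nonneg (Matrix.toEuclideanLin (Mz z x) w)]

lemma Mz_det_ne (hz : z.im ≠ 0) (x : Vec N) : (Mz z x).det ≠ 0 := by
  intro hdet
  obtain ⟨v, hv, hv0⟩ := (Matrix.exists_mulVec_eq_zero_iff).mpr hdet
  set w : EuclideanSpace ℂ (Fin N) := (WithLp.equiv 2 (Fin N → ℂ)).symm v
  have hwne : w ≠ 0 := by
    intro hw0
    exact hv (by simpa [w] using congrArg (WithLp.equiv 2 (Fin N → ℂ)) hw0)
  have : Matrix.toEuclideanLin (Mz z x) w = 0 := by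
    rw [Matrix.toEuclideanLin_apply]
    have : w.ofLp = v := rfl
    rw [this, hv0]
    rfl
  have hlb := lower_bound z hz x w
  rw [this, norm_zero] at hlb
  have : ‖w‖ > 0 := norm_pos_iff.mpr hwne
  have : |z.im| > 0 := abs_pos.mpr hz
  nlinarith

lemma Mz_isUnit (hz : z.im ≠ 0) (x : Vec N) : IsUnit (Mz z x) := by
  rw [Matrix.isUnit_iff_isUnit_det]
  exact isUnit_iff_ne_zero.mpr (Mz_det_ne z hz x)

noncomputable def Gz (x : Vec N) : Mat N := (Mz z x)⁻¹

lemma Mz_mul_Gz (hz : z.im ≠ 0) (x : Vec N) : Mz z x * Gz z x = 1 :=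
  Matrix.mul_nonsing_inv _ (isUnit_iff_ne_zero.mpr (Mz_det_ne z hz x))

lemma OB_Gz (hz : z.im ≠ 0) (x : Vec N) : OB (Gz z x) |z.im|⁻¹ := by
  intro w
  have h1 := lower_bound z hz x (Matrix.toEuclideanLin (Gz z x) w)
  rw [← toEuclideanLin_mul, Mz_mul_Gz z hz x] at h1
  rw [show Matrix.toEuclideanLin (1 : Mat N) w = w by
    rw [Matrix.toEuclideanLin_apply, Matrix.one_mulVec]] at h1
  have hzim : (0:ℝ) < |z.im| := abs_pos.mpr hz
  rw [← div_eq_inv_mul, le_div_iff₀ hzim]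
  nlinarith [h1]


/-! ### Calculus -/

noncomputable def Aclm (N : ℕ) : Vec N →L[ℝ] Mat N :=
  LinearMap.toContinuousLinearMap (Alin N)

lemma Aclm_apply (u : Vec N) : Aclm N u = Alin N u := by
  rw [Aclm, LinearMap.coe_toContinuousLinearMap']

noncomputable def trc (N : ℕ) : Mat N →L[ℝ] ℂ :=
  LinearMap.toContinuousLinearMap
    ((Matrix.traceLinearMap (Fin N) ℂ ℂ).restrictScalars ℝ)

lemma trc_apply (W : Mat N) : trc N W = Matrix.trace W := by
  rw [trc, LinearMap.coe_toContinuousLinearMap']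
  rfl

lemma hasM (y : Vec N) : HasFDerivAt (Mz (N := N) z) (Aclm N) y := by
  have h1 : HasFDerivAt (fun y : Vec N => Aclm N y - z • (1 : Mat N)) (Aclm N) y :=
    (Aclm N).hasFDerivAt.sub_const _
  have : (fun y : Vec N => Aclm N y - z • (1 : Mat N)) = Mz (N := N) z := by
    funext y
    rw [Aclm_apply, Mz]
  rwa [this] at h1

lemma Gz_eq_inverse (hz : z.im ≠ 0) :
    Gz (N := N) z = Ring.inverse ∘ (Mz (N := N) z) := by
  funext y
  rw [Gz, Function.comp_apply, Matrix.nonsing_inv_eq_ringInverse]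

noncomputable def dG (x : Vec N) : Vec N →L[ℝ] Mat N :=
  -((ContinuousLinearMap.mulLeftRight ℝ (Mat N) (Gz z x) (Gz z x)).comp (Aclm N))

lemma dG_apply (x : Vec N) (u : Vec N) :
    dG z x u = -(Gz z x * Alin N u * Gz z x) := by
  rw [dG]
  rfl

lemma hasG (hz : z.im ≠ 0) (x : Vec N) : HasFDerivAt (Gz (N := N) z) (dG z x) x := by
  have hu : IsUnit (Mz z x) := Mz_isUnit z hz x
  have hux : ((hu.unit : (Mat N)ˣ) : Mat N) = Mz z x := hu.unit_spec
  have huinv : (((hu.unit)⁻¹ : (Mat N)ˣ) : Mat N) = Gz z x := by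
    rw [← Ring.inverse_unit hu.unit, hux, Gz, Matrix.nonsing_inv_eq_ringInverse]
  have h1 : HasFDerivAt (Ring.inverse (M₀ := Mat N))
      (-ContinuousLinearMap.mulLeftRight ℝ (Mat N) (Gz z x) (Gz z x)) (Mz z x) := by
    have := hasFDerivAt_ringInverse (𝕜 := ℝ) (R := Mat N) hu.unit
    rw [hux, huinv] at this
    exact this
  have h2 := h1.comp x (hasM z x)
  rw [← Gz_eq_inverse z hz] at h2
  rw [dG]
  exact h2

lemma contDiff_Gz (hz : z.im ≠ 0) : ContDiff ℝ 3 (Gz (N := N) z) := by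
  rw [contDiff_iff_contDiffAt]
  intro x
  have hu : IsUnit (Mz z x) := Mz_isUnit z hz x
  have hux : ((hu.unit : (Mat N)ˣ) : Mat N) = Mz z x := hu.unit_spec
  have h1 : ContDiffAt ℝ 3 (Ring.inverse (M₀ := Mat N)) (Mz z x) := by
    rw [← hux]
    exact contDiffAt_ringInverse ℝ hu.unit
  have h2 : ContDiffAt ℝ 3 (Mz (N := N) z) x := by
    have : ContDiff ℝ 3 (Mz (N := N) z) := by
      have h3 : ContDiff ℝ 3 (fun y : Vec N => Aclm N y - z • (1 : Mat N)) :=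
        ((Aclm N).contDiff (n := 3)).sub (contDiff_const (c := z • (1 : Mat N)))
      have heq : (fun y : Vec N => Aclm N y - z • (1 : Mat N)) = Mz (N := N) z := by
        funext y; rw [Aclm_apply, Mz]
      rwa [heq] at h3
    exact this.contDiffAt
  have := h1.comp x h2
  rwa [← Gz_eq_inverse z hz] at this

/-- canonical form of `h` -/
noncomputable def h0 (x : Vec N) : ℂ := (N : ℂ)⁻¹ • trc N (Gz z x)

lemma contDiff_h0 (hz : z.im ≠ 0) : ContDiff ℝ 3 (h0 (N := N) z) :=
  (((trc N).contDiff).comp (contDiff_Gz z hz)).const_smul ((N : ℂ)⁻¹)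

noncomputable def F1 (x : Vec N) : Vec N →L[ℝ] ℂ :=
  (N : ℂ)⁻¹ • ((trc N).comp (dG z x))

lemma hasF1 (hz : z.im ≠ 0) (x : Vec N) : HasFDerivAt (h0 (N := N) z) (F1 z x) x :=
  ((trc N).hasFDerivAt.comp x (hasG z hz x)).const_smul ((N : ℂ)⁻¹)

lemma fderiv_h0 (hz : z.im ≠ 0) : fderiv ℝ (h0 (N := N) z) = F1 z :=
  funext fun x => (hasF1 z hz x).fderiv

lemma trace_PEQ (E P Q : Mat N) :
    Matrix.trace (P * E * Q) = Matrix.trace (E * (Q * P)) := by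
  rw [Matrix.trace_mul_comm (P * E) Q, ← Matrix.mul_assoc, Matrix.trace_mul_comm (Q * P) E]

lemma F1_apply (x : Vec N) (α : Idx N) :
    F1 z x (Pi.single α 1)
      = -((N : ℂ)⁻¹ • Matrix.trace (Emat α * (Gz z x * Gz z x))) := by
  rw [F1]
  simp only [ContinuousLinearMap.coe_smul', Pi.smul_apply, ContinuousLinearMap.comp_apply]
  rw [dG_apply, map_neg, trc_apply, ← Emat, trace_PEQ, smul_neg]


lemma OB.mono {W : Mat N} {c c' : ℝ} (h : OB W c) (hcc : c ≤ c') : OB W c' := by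
  intro w
  exact le_trans (h w) (mul_le_mul_of_nonneg_right hcc (norm_nonneg w))

lemma OB.add {W W' : Mat N} {c c' : ℝ} (h : OB W c) (h' : OB W' c') :
    OB (W + W') (c + c') := by
  intro w
  rw [map_add]
  calc ‖Matrix.toEuclideanLin W w + Matrix.toEuclideanLin W' w‖
      ≤ ‖Matrix.toEuclideanLin W w‖ + ‖Matrix.toEuclideanLin W' w‖ := norm_add_le _ _
    _ ≤ c * ‖w‖ + c' * ‖w‖ := add_le_add (h w) (h' w)
    _ = (c + c') * ‖w‖ := by ring

lemma OB.neg {W : Mat N} {c : ℝ} (h : OB W c) : OB (-W) c := by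
  intro w
  rw [map_neg, LinearMap.neg_apply, norm_neg]
  exact h w

noncomputable def trcE (α : Idx N) : Mat N →L[ℝ] ℂ :=
  (trc N).comp (ContinuousLinearMap.mul ℝ (Mat N) (Emat α))

lemma trcE_apply (α : Idx N) (W : Mat N) : trcE α W = Matrix.trace (Emat α * W) := by
  rw [trcE]
  rfl

noncomputable def DGG (x : Vec N) : Vec N →L[ℝ] Mat N :=
  Gz z x • dG z x + (dG z x).smulRight (Gz z x)

lemma hasGG (hz : z.im ≠ 0) (x : Vec N) :
    HasFDerivAt (fun y => Gz z y * Gz z y) (DGG z x) x :=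
  (hasG z hz x).mul' (hasG z hz x)

noncomputable def qc (α : Idx N) : Vec N → ℂ :=
  fun y => -((N : ℂ)⁻¹ • trcE α (Gz z y * Gz z y))

noncomputable def F2 (α : Idx N) (x : Vec N) : Vec N →L[ℝ] ℂ :=
  -((N : ℂ)⁻¹ • ((trcE α).comp (DGG z x)))

lemma hasqc (hz : z.im ≠ 0) (α : Idx N) (x : Vec N) :
    HasFDerivAt (qc z α) (F2 z α x) x :=
  (((trcE α).hasFDerivAt.comp x (hasGG z hz x)).const_smul ((N : ℂ)⁻¹)).neg

lemma qfun_eq (hz : z.im ≠ 0) (α : Idx N) :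
    (fun y => fderiv ℝ (h0 (N := N) z) y (Pi.single α 1)) = qc z α := by
  funext y
  rw [fderiv_h0 z hz, F1_apply]
  simp only [qc, trcE_apply]


lemma DGG_apply (x : Vec N) (β : Idx N) :
    DGG z x (Pi.single β 1)
      = -(Gz z x * (Gz z x * Emat β * Gz z x)) + -(Gz z x * Emat β * Gz z x * Gz z x) := by
  rw [DGG]
  simp only [ContinuousLinearMap.add_apply, ContinuousLinearMap.smul_apply,
    ContinuousLinearMap.smulRight_apply, dG_apply, smul_eq_mul, mul_neg, neg_mul]
  rw [show Alin N (Pi.single β 1) = Emat β from rfl]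

lemma F2_apply (x : Vec N) (α β : Idx N) :
    F2 z α x (Pi.single β 1)
      = (N : ℂ)⁻¹ • (trcE α (Gz z x * (Gz z x * Emat β * Gz z x))
          + trcE α (Gz z x * Emat β * Gz z x * Gz z x)) := by
  rw [F2]
  simp only [ContinuousLinearMap.neg_apply, ContinuousLinearMap.coe_smul', Pi.smul_apply,
    ContinuousLinearMap.comp_apply, DGG_apply, map_add, map_neg, smul_eq_mul]
  ring

noncomputable def rc (α β : Idx N) : Vec N → ℂ :=
  fun y => (N : ℂ)⁻¹ • (trcE α (Gz z y * (Gz z y * Emat β * Gz z y))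
    + trcE α (Gz z y * Emat β * Gz z y * Gz z y))

lemma rfun_eq (hz : z.im ≠ 0) (α β : Idx N) :
    (fun y => fderiv ℝ (qc z α) y (Pi.single β 1)) = rc z α β := by
  funext y
  rw [(hasqc z hz α y).fderiv, F2_apply]
  rfl

noncomputable def DPa (β : Idx N) (x : Vec N) : Vec N →L[ℝ] Mat N :=
  Gz z x • ((Gz z x * Emat β) • dG z x
      + ((dG z x).smulRight (Emat β)).smulRight (Gz z x))
    + (dG z x).smulRight (Gz z x * Emat β * Gz z x)

noncomputable def DPb (β : Idx N) (x : Vec N) : Vec N →L[ℝ] Mat N :=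
  (Gz z x * Emat β * Gz z x) • dG z x
    + ((Gz z x * Emat β) • dG z x
        + ((dG z x).smulRight (Emat β)).smulRight (Gz z x)).smulRight (Gz z x)

lemma hasPa (hz : z.im ≠ 0) (β : Idx N) (x : Vec N) :
    HasFDerivAt (fun y => Gz z y * (Gz z y * Emat β * Gz z y)) (DPa z β x) x :=
  (hasG z hz x).mul' (((hasG z hz x).mul_const' (Emat β)).mul' (hasG z hz x))

lemma hasPb (hz : z.im ≠ 0) (β : Idx N) (x : Vec N) :
    HasFDerivAt (fun y => Gz z y * Emat β * Gz z y * Gz z y) (DPb z β x) x :=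
  (((hasG z hz x).mul_const' (Emat β)).mul' (hasG z hz x)).mul' (hasG z hz x)

noncomputable def F3 (α β : Idx N) (x : Vec N) : Vec N →L[ℝ] ℂ :=
  (N : ℂ)⁻¹ • (((trcE α).comp (DPa z β x)) + ((trcE α).comp (DPb z β x)))

lemma hasrc (hz : z.im ≠ 0) (α β : Idx N) (x : Vec N) :
    HasFDerivAt (rc z α β) (F3 z α β x) x :=
  ((((trcE α).hasFDerivAt.comp x (hasPa z hz β x)).add
    ((trcE α).hasFDerivAt.comp x (hasPb z hz β x))).const_smul ((N : ℂ)⁻¹))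

lemma F3_apply (α β γ : Idx N) (x : Vec N) :
    F3 z α β x (Pi.single γ 1)
      = (N : ℂ)⁻¹ • (trcE α (DPa z β x (Pi.single γ 1))
          + trcE α (DPb z β x (Pi.single γ 1))) := by
  rw [F3]
  simp only [ContinuousLinearMap.coe_smul', Pi.smul_apply, ContinuousLinearMap.add_apply,
    ContinuousLinearMap.comp_apply]


/-! ### Norm bounds on derivative values -/

lemma norm_c0 : ‖((N : ℂ)⁻¹)‖ = ((N : ℝ))⁻¹ := by
  rw [norm_inv, Complex.norm_natCast]

lemma DPa_apply (x : Vec N) (β γ : Idx N) :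
    DPa z β x (Pi.single γ 1) =
      Gz z x * ((Gz z x * Emat β) * -(Gz z x * Emat γ * Gz z x)
          + (-(Gz z x * Emat γ * Gz z x) * Emat β) * Gz z x)
        + -(Gz z x * Emat γ * Gz z x) * (Gz z x * Emat β * Gz z x) := by
  rw [DPa]
  simp only [ContinuousLinearMap.add_apply, ContinuousLinearMap.smul_apply,
    ContinuousLinearMap.smulRight_apply, dG_apply, smul_eq_mul]
  rw [show Alin N (Pi.single γ 1) = Emat γ from rfl]

lemma DPb_apply (x : Vec N) (β γ : Idx N) :
    DPb z β x (Pi.single γ 1) =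
      (Gz z x * Emat β * Gz z x) * -(Gz z x * Emat γ * Gz z x)
        + ((Gz z x * Emat β) * -(Gz z x * Emat γ * Gz z x)
            + (-(Gz z x * Emat γ * Gz z x) * Emat β) * Gz z x) * Gz z x := by
  rw [DPb]
  simp only [ContinuousLinearMap.add_apply, ContinuousLinearMap.smul_apply,
    ContinuousLinearMap.smulRight_apply, dG_apply, smul_eq_mul]
  rw [show Alin N (Pi.single γ 1) = Emat γ from rfl]

section Bounds

variable (hz : z.im ≠ 0) (x : Vec N)

include hz

lemma OB_P3 (β : Idx N) : OB (Gz z x * Emat β * Gz z x)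
    (|z.im|⁻¹ * (Real.sqrt N)⁻¹ * |z.im|⁻¹) :=
  (((OB_Gz z hz x).mul (OB_Emat β) (by positivity)).mul (OB_Gz z hz x) (by positivity))

lemma OB_DPa_apply (β γ : Idx N) :
    OB (DPa z β x (Pi.single γ 1)) (3 * (|z.im|⁻¹ ^ 4 * ((Real.sqrt N)⁻¹) ^ 2)) := by
  rw [DPa_apply]
  set v1 := |z.im|⁻¹
  set s1 := (Real.sqrt N)⁻¹
  have hG := OB_Gz z hz x
  have hP := OB_P3 z hz x
  have h1 : OB (Gz z x * ((Gz z x * Emat β) * -(Gz z x * Emat γ * Gz z x)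
      + (-(Gz z x * Emat γ * Gz z x) * Emat β) * Gz z x))
      (v1 * ((v1 * s1) * (v1 * s1 * v1) + ((v1 * s1 * v1) * s1) * v1)) := by
    refine OB.mul hG (OB.add ?_ ?_) (by positivity)
    · exact (hG.mul (OB_Emat β) (by positivity)).mul ((hP γ).neg) (by positivity)
    · exact (((hP γ).neg.mul (OB_Emat β) (by positivity)).mul hG (by positivity))
  have h2 : OB (-(Gz z x * Emat γ * Gz z x) * (Gz z x * Emat β * Gz z x))
      ((v1 * s1 * v1) * (v1 * s1 * v1)) :=
    ((hP γ).neg.mul (hP β) (by positivity))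
  exact (h1.add h2).mono (le_of_eq (by ring))

lemma OB_DPb_apply (β γ : Idx N) :
    OB (DPb z β x (Pi.single γ 1)) (3 * (|z.im|⁻¹ ^ 4 * ((Real.sqrt N)⁻¹) ^ 2)) := by
  rw [DPb_apply]
  set v1 := |z.im|⁻¹
  set s1 := (Real.sqrt N)⁻¹
  have hG := OB_Gz z hz x
  have hP := OB_P3 z hz x
  have h1 : OB ((Gz z x * Emat β * Gz z x) * -(Gz z x * Emat γ * Gz z x))
      ((v1 * s1 * v1) * (v1 * s1 * v1)) :=
    (hP β).mul ((hP γ).neg) (by positivity)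
  have h2 : OB (((Gz z x * Emat β) * -(Gz z x * Emat γ * Gz z x)
      + (-(Gz z x * Emat γ * Gz z x) * Emat β) * Gz z x) * Gz z x)
      (((v1 * s1) * (v1 * s1 * v1) + ((v1 * s1 * v1) * s1) * v1) * v1) := by
    refine OB.mul (OB.add ?_ ?_) hG (by positivity)
    · exact (hG.mul (OB_Emat β) (by positivity)).mul ((hP γ).neg) (by positivity)
    · exact (((hP γ).neg.mul (OB_Emat β) (by positivity)).mul hG (by positivity))
  exact (h1.add h2).mono (le_of_eq (by ring))

lemma bound1 (α : Idx N) :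
    ‖F1 z x (Pi.single α 1)‖ ≤ (N:ℝ)⁻¹ * (2 * (Real.sqrt N)⁻¹ * (|z.im|⁻¹ * |z.im|⁻¹)) := by
  rw [F1_apply, norm_neg, norm_smul, norm_c0]
  have hGG : OB (Gz z x * Gz z x) (|z.im|⁻¹ * |z.im|⁻¹) :=
    (OB_Gz z hz x).mul (OB_Gz z hz x) (by positivity)
  have := trace_Emat_mul_le α _ _ hGG (by positivity)
  exact mul_le_mul_of_nonneg_left this (by positivity)

lemma bound2 (α β : Idx N) :
    ‖F2 z α x (Pi.single β 1)‖
      ≤ (N:ℝ)⁻¹ * (4 * ((Real.sqrt N)⁻¹) ^ 2 * |z.im|⁻¹ ^ 3) := by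
  rw [F2_apply, norm_smul, norm_c0]
  set v1 := |z.im|⁻¹
  set s1 := (Real.sqrt N)⁻¹
  have hG := OB_Gz z hz x
  have hP := OB_P3 z hz x
  have h1 : ‖trcE α (Gz z x * (Gz z x * Emat β * Gz z x))‖
      ≤ 2 * s1 * (v1 * (v1 * s1 * v1)) := by
    rw [trcE_apply]
    exact trace_Emat_mul_le α _ _ (hG.mul (hP β) (by positivity)) (by positivity)
  have h2 : ‖trcE α (Gz z x * Emat β * Gz z x * Gz z x)‖
      ≤ 2 * s1 * ((v1 * s1 * v1) * v1) := by
    rw [trcE_apply]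
    exact trace_Emat_mul_le α _ _ ((hP β).mul hG (by positivity)) (by positivity)
  calc (N:ℝ)⁻¹ * ‖trcE α (Gz z x * (Gz z x * Emat β * Gz z x))
          + trcE α (Gz z x * Emat β * Gz z x * Gz z x)‖
      ≤ (N:ℝ)⁻¹ * (2 * s1 * (v1 * (v1 * s1 * v1)) + 2 * s1 * ((v1 * s1 * v1) * v1)) := by
        exact mul_le_mul_of_nonneg_left
          (le_trans (norm_add_le _ _) (add_le_add h1 h2)) (by positivity)
    _ = (N:ℝ)⁻¹ * (4 * s1 ^ 2 * v1 ^ 3) := by ring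

lemma bound3 (α β γ : Idx N) :
    ‖F3 z α β x (Pi.single γ 1)‖
      ≤ (N:ℝ)⁻¹ * (12 * ((Real.sqrt N)⁻¹) ^ 3 * |z.im|⁻¹ ^ 4) := by
  rw [F3_apply, norm_smul, norm_c0]
  set v1 := |z.im|⁻¹
  set s1 := (Real.sqrt N)⁻¹
  have h1 : ‖trcE α (DPa z β x (Pi.single γ 1))‖
      ≤ 2 * s1 * (3 * (v1 ^ 4 * s1 ^ 2)) := by
    rw [trcE_apply]
    exact trace_Emat_mul_le α _ _ (OB_DPa_apply z hz x β γ) (by positivity)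
  have h2 : ‖trcE α (DPb z β x (Pi.single γ 1))‖
      ≤ 2 * s1 * (3 * (v1 ^ 4 * s1 ^ 2)) := by
    rw [trcE_apply]
    exact trace_Emat_mul_le α _ _ (OB_DPb_apply z hz x β γ) (by positivity)
  calc (N:ℝ)⁻¹ * ‖trcE α (DPa z β x (Pi.single γ 1))
          + trcE α (DPb z β x (Pi.single γ 1))‖
      ≤ (N:ℝ)⁻¹ * (2 * s1 * (3 * (v1 ^ 4 * s1 ^ 2)) + 2 * s1 * (3 * (v1 ^ 4 * s1 ^ 2))) := by
        exact mul_le_mul_of_nonneg_left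
          (le_trans (norm_add_le _ _) (add_le_add h1 h2)) (by positivity)
    _ = (N:ℝ)⁻¹ * (12 * s1 ^ 3 * v1 ^ 4) := by ring

end Bounds

/-! ### rpow arithmetic -/

lemma s1_mul_s1 (hN : 0 < N) : (Real.sqrt N)⁻¹ * (Real.sqrt N)⁻¹ = (N:ℝ)⁻¹ := by
  rw [← mul_inv, Real.mul_self_sqrt (by positivity)]

lemma rpow_neg_three_half (hN : 0 < N) :
    (N:ℝ) ^ (-(3:ℝ)/2) = (N:ℝ)⁻¹ * (Real.sqrt N)⁻¹ := by
  have hN0 : (0:ℝ) < N := by exact_mod_cast hN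
  rw [show (-(3:ℝ)/2) = -(1 + 1/2) by norm_num, Real.rpow_neg hN0.le,
    Real.rpow_add hN0, Real.rpow_one, mul_inv]
  congr 1
  rw [Real.sqrt_eq_rpow]

lemma rpow_neg_two (hN : 0 < N) : (N:ℝ) ^ (-(2:ℝ)) = (N:ℝ)⁻¹ * (N:ℝ)⁻¹ := by
  have hN0 : (0:ℝ) < N := by exact_mod_cast hN
  rw [show (-(2:ℝ)) = -(1 + 1) by norm_num, Real.rpow_neg hN0.le,
    Real.rpow_add hN0, Real.rpow_one, mul_inv]

lemma rpow_neg_five_half (hN : 0 < N) :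
    (N:ℝ) ^ (-(5:ℝ)/2) = (N:ℝ)⁻¹ * ((N:ℝ)⁻¹ * (Real.sqrt N)⁻¹) := by
  have hN0 : (0:ℝ) < N := by exact_mod_cast hN
  rw [show (-(5:ℝ)/2) = -(1 + (1 + 1/2)) by norm_num, Real.rpow_neg hN0.le,
    Real.rpow_add hN0, Real.rpow_add hN0, Real.rpow_one, mul_inv, mul_inv]
  congr 2
  rw [Real.sqrt_eq_rpow]

end StieltjesAux

open StieltjesAux in
/-- Bounds on the derivatives of the normalized trace of the resolvent of a Wigner-type
matrix with respect to its entries.  With `A(x)ᵢⱼ = N^{-1/2} x_{min(i,j),max(i,j)}`,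
`G(x) = (A(x) - zI)⁻¹` and `h(x) = N⁻¹ Tr G(x)`, for any index pairs `α, β, γ`:
`|∂_α h| ≤ 2 |v|⁻² N^{-3/2}`, `|∂_β ∂_α h| ≤ 4 |v|⁻³ N^{-2}`, and
`|∂_γ ∂_β ∂_α h| ≤ 6 ⬝ 2^{3/2} |v|⁻⁴ N^{-5/2}`, where `v = Im z ≠ 0`. -/
theorem stieltjes_transform_derivative_bounds
    {N : ℕ} (hN : 0 < N) (z : ℂ) (hz : z.im ≠ 0)
    (A : ({p : Fin N × Fin N // p.1 ≤ p.2} → ℝ) → Matrix (Fin N) (Fin N) ℂ)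
    (hA : ∀ x i j, A x i j = ((x ⟨(min i j, max i j), min_le_max⟩ : ℝ) / Real.sqrt N : ℂ))
    (h : ({p : Fin N × Fin N // p.1 ≤ p.2} → ℝ) → ℂ)
    (hh : ∀ x, h x = (N : ℂ)⁻¹ * (A x - z • (1 : Matrix (Fin N) (Fin N) ℂ))⁻¹.trace) :
    ∀ (x : {p : Fin N × Fin N // p.1 ≤ p.2} → ℝ)
      (α β γ : {p : Fin N × Fin N // p.1 ≤ p.2}),
      (‖iteratedFDeriv ℝ 1 h x (fun _ => Pi.single α 1)‖
          ≤ 2 * |z.im|⁻¹ ^ 2 * (N : ℝ) ^ (-(3 : ℝ) / 2))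
      ∧ (‖iteratedFDeriv ℝ 2 h x ![Pi.single β 1, Pi.single α 1]‖
          ≤ 4 * |z.im|⁻¹ ^ 3 * (N : ℝ) ^ (-(2 : ℝ)))
      ∧ (‖iteratedFDeriv ℝ 3 h x ![Pi.single γ 1, Pi.single β 1, Pi.single α 1]‖
          ≤ 6 * (2 : ℝ) ^ ((3 : ℝ) / 2) * |z.im|⁻¹ ^ 4 * (N : ℝ) ^ (-(5 : ℝ) / 2)) := by
  intro x α β γ
  set v1 : ℝ := |z.im|⁻¹ with hv1def
  set s1 : ℝ := (Real.sqrt N)⁻¹ with hs1def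
  -- identify h with the canonical h0
  have hheq : h = h0 (N := N) z := by
    funext y
    rw [hh, h0, trc_apply, smul_eq_mul]
    congr 2
    rw [Gz, Mz]
    congr 2
    ext i j
    rw [hA, Alin_apply]
    push_cast
    ring
  rw [hheq]
  have hdiff1 : Differentiable ℝ (fderiv ℝ (h0 (N := N) z)) :=
    ((contDiff_h0 z hz).fderiv_right (m := 2) (by norm_num)).differentiable (by norm_num)
  have hdiff2 : Differentiable ℝ (fderiv ℝ (fderiv ℝ (h0 (N := N) z))) :=
    (((contDiff_h0 z hz).fderiv_right (m := 2) (by norm_num)).fderiv_right (m := 1)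
      (by norm_num)).differentiable (by norm_num)
  refine ⟨?_, ?_, ?_⟩
  · -- first derivative
    rw [iteratedFDeriv_one_apply, fderiv_h0 z hz]
    refine le_trans (bound1 z hz x α) ?_
    rw [rpow_neg_three_half hN]
    exact le_of_eq (by ring)
  · -- second derivative
    have e2 : iteratedFDeriv ℝ 2 (h0 (N := N) z) x ![Pi.single β 1, Pi.single α 1]
        = fderiv ℝ (fderiv ℝ (h0 (N := N) z)) x (Pi.single β 1) (Pi.single α 1) := by
      rw [iteratedFDeriv_two_apply]
      simp
    have step2 : fderiv ℝ (fun y => fderiv ℝ (h0 (N := N) z) y (Pi.single α 1)) x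
        = (fderiv ℝ (fderiv ℝ (h0 (N := N) z)) x).flip (Pi.single α 1) := by
      rw [fderiv_clm_apply (hdiff1 x) (differentiableAt_const _)]
      simp
    have val2 : fderiv ℝ (fderiv ℝ (h0 (N := N) z)) x (Pi.single β 1) (Pi.single α 1)
        = F2 z α x (Pi.single β 1) := by
      have h1 : fderiv ℝ (fderiv ℝ (h0 (N := N) z)) x (Pi.single β 1) (Pi.single α 1)
          = fderiv ℝ (fun y => fderiv ℝ (h0 (N := N) z) y (Pi.single α 1)) x
              (Pi.single β 1) := by
        rw [step2]
        rfl
      rw [h1, qfun_eq z hz α, (hasqc z hz α x).fderiv]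
    rw [e2, val2]
    refine le_trans (bound2 z hz x α β) ?_
    rw [rpow_neg_two hN]
    have hs2 : s1 ^ 2 = (N:ℝ)⁻¹ := by rw [pow_two, hs1def, s1_mul_s1 hN]
    rw [hs2]
    exact le_of_eq (by ring)
  · -- third derivative
    have e3 : iteratedFDeriv ℝ 3 (h0 (N := N) z) x
          ![Pi.single γ 1, Pi.single β 1, Pi.single α 1]
        = fderiv ℝ (fderiv ℝ (fderiv ℝ (h0 (N := N) z))) x
            (Pi.single γ 1) (Pi.single β 1) (Pi.single α 1) := by
      rw [iteratedFDeriv_succ_apply_right, iteratedFDeriv_two_apply]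
      norm_num [Fin.init]
      rfl
    have tfun : (fun y => fderiv ℝ (fderiv ℝ (h0 (N := N) z)) y
          (Pi.single β 1) (Pi.single α 1)) = rc z α β := by
      funext y
      have hstep : fderiv ℝ (fun y' => fderiv ℝ (h0 (N := N) z) y' (Pi.single α 1)) y
          = (fderiv ℝ (fderiv ℝ (h0 (N := N) z)) y).flip (Pi.single α 1) := by
        rw [fderiv_clm_apply (hdiff1 y) (differentiableAt_const _)]
        simp
      have h1 : fderiv ℝ (fderiv ℝ (h0 (N := N) z)) y (Pi.single β 1) (Pi.single α 1)
          = fderiv ℝ (fun y' => fderiv ℝ (h0 (N := N) z) y' (Pi.single α 1)) y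
              (Pi.single β 1) := by
        rw [hstep]
        rfl
      rw [h1, qfun_eq z hz α, (hasqc z hz α y).fderiv, F2_apply]
      rfl
    have hds : DifferentiableAt ℝ
        (fun y => fderiv ℝ (fderiv ℝ (h0 (N := N) z)) y (Pi.single β 1)) x :=
      (hdiff2 x).clm_apply (differentiableAt_const _)
    have stepA : fderiv ℝ (fun y => fderiv ℝ (fderiv ℝ (h0 (N := N) z)) y (Pi.single β 1)) x
        = (fderiv ℝ (fderiv ℝ (fderiv ℝ (h0 (N := N) z))) x).flip (Pi.single β 1) := by
      rw [fderiv_clm_apply (hdiff2 x) (differentiableAt_const _)]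
      simp
    have stepB : fderiv ℝ (fun y => fderiv ℝ (fderiv ℝ (h0 (N := N) z)) y
          (Pi.single β 1) (Pi.single α 1)) x
        = (fderiv ℝ (fun y => fderiv ℝ (fderiv ℝ (h0 (N := N) z)) y (Pi.single β 1)) x).flip
            (Pi.single α 1) := by
      rw [fderiv_clm_apply hds (differentiableAt_const _)]
      simp
    have val3 : fderiv ℝ (fderiv ℝ (fderiv ℝ (h0 (N := N) z))) x
          (Pi.single γ 1) (Pi.single β 1) (Pi.single α 1)
        = F3 z α β x (Pi.single γ 1) := by
      have h1 : fderiv ℝ (fderiv ℝ (fderiv ℝ (h0 (N := N) z))) x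
            (Pi.single γ 1) (Pi.single β 1) (Pi.single α 1)
          = fderiv ℝ (fun y => fderiv ℝ (fderiv ℝ (h0 (N := N) z)) y (Pi.single β 1)) x
              (Pi.single γ 1) (Pi.single α 1) := by
        rw [stepA]
        rfl
      have h2 : fderiv ℝ (fun y => fderiv ℝ (fderiv ℝ (h0 (N := N) z)) y (Pi.single β 1)) x
            (Pi.single γ 1) (Pi.single α 1)
          = fderiv ℝ (fun y => fderiv ℝ (fderiv ℝ (h0 (N := N) z)) y
              (Pi.single β 1) (Pi.single α 1)) x (Pi.single γ 1) := by
        rw [stepB]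
        rfl
      rw [h1, h2, tfun, (hasrc z hz α β x).fderiv]
    rw [e3, val3]
    refine le_trans (bound3 z hz x α β γ) ?_
    rw [rpow_neg_five_half hN]
    have hs3 : s1 ^ 3 = (N:ℝ)⁻¹ * s1 := by
      rw [pow_succ, pow_two, hs1def, s1_mul_s1 hN]
    have h2le : (2:ℝ) ≤ (2:ℝ) ^ ((3:ℝ)/2) := by
      calc (2:ℝ) = (2:ℝ) ^ (1:ℝ) := (Real.rpow_one 2).symm
        _ ≤ (2:ℝ) ^ ((3:ℝ)/2) :=
          Real.rpow_le_rpow_of_exponent_le one_le_two (by norm_num)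
    have hB : (0:ℝ) ≤ v1 ^ 4 * ((N:ℝ)⁻¹ * ((N:ℝ)⁻¹ * s1)) := by positivity
    calc (N:ℝ)⁻¹ * (12 * s1 ^ 3 * v1 ^ 4)
        = 12 * (v1 ^ 4 * ((N:ℝ)⁻¹ * ((N:ℝ)⁻¹ * s1))) := by rw [hs3]; ring
      _ ≤ (6 * (2:ℝ) ^ ((3:ℝ)/2)) * (v1 ^ 4 * ((N:ℝ)⁻¹ * ((N:ℝ)⁻¹ * s1))) := by
          refine mul_le_mul_of_nonneg_right ?_ hB
          linarith
      _ = 6 * (2:ℝ) ^ ((3:ℝ)/2) * v1 ^ 4 * ((N:ℝ)⁻¹ * ((N:ℝ)⁻¹ * s1)) := by ring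
end
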